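/- Fix γ,δ ∈ ℂ and let n ≥ 1. For every s ∈ ℂ with (2s+γ+δ)·(2s+γ+δ+2) ≠ 0, χ_1(s)·(𝕊(𝔻χ_n))(s) = (n(n−1)(2n + γ + δ − 1)/2)·χ_{n−1}(s) − n·χ_n(s), where χ_1(s) = −λ(s) = −s(s+γ+δ+1). -/

import Mathlib

open Complex Finset

/-- Divided-difference operator on the quadratic lattice λ(s) = s(s+γ+δ+1):
(𝔻f)(s) = (f(s+1/2) − f(s−1/2))/(2s+γ+δ+1). -/
noncomputable def Dq (γ δ : ℂ) (f : ℂ → ℂ) (s : ℂ) : ℂ :=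
  (f (s + 1/2) - f (s - 1/2)) / (2*s + γ + δ + 1)

/-- Averaging operator on the quadratic lattice. -/
noncomputable def Sq (f : ℂ → ℂ) (s : ℂ) : ℂ :=
  (f (s + 1/2) + f (s - 1/2)) / 2

/-- χ_n(s) = ∏_{k=0}^{n−1}(k − s)(s + γ + δ + 1 + k). -/
noncomputable def chi (γ δ : ℂ) (n : ℕ) (s : ℂ) : ℂ :=
  ∏ k ∈ Finset.range n, (((k : ℂ) - s) * (s + γ + δ + 1 + k))

/-!
Writing `χ_n(s) = (-s)_n (s+γ+δ+1)_n` as a product of two Pochhammer symbols, the divided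
difference lowers the degree: `χ_{n+1}(s+1) - χ_{n+1}(s) = -(n+1)(2s+γ+δ+2) χ'_n(s)`, where `χ'` is
`χ` with `γ` replaced by `γ+1`. Averaging, the claim becomes the denominator-free identity
`λ(s) (χ'_n(s) + χ'_n(s-1)) = n(2n+γ+δ+1) χ_n(s) - 2 χ_{n+1}(s)`, which follows from the two
Pochhammer recursions `(x)_{n+1} = x (x+1)_n = (x)_n (x+n)`.
-/

open Polynomial

theorem ascPochhammer_eval_eq_prod_range {R : Type*} [CommSemiring R] (n : ℕ) (x : R) :
    (ascPochhammer R n).eval x = ∏ k ∈ range n, (x + k) := by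
  induction n with
  | zero => simp
  | succ n ih => rw [ascPochhammer_succ_eval, ih, prod_range_succ]

theorem ascPochhammer_succ_eval_left {R : Type*} [CommSemiring R] (n : ℕ) (x : R) :
    (ascPochhammer R (n + 1)).eval x = x * (ascPochhammer R n).eval (x + 1) := by
  simp [ascPochhammer_succ_left, eval_comp]

theorem ascPochhammer_eval_mul_eval_add_one {R : Type*} [CommSemiring R] (n : ℕ) (x : R) :
    x * (ascPochhammer R n).eval (x + 1) = (ascPochhammer R n).eval x * (x + n) := by
  rw [← ascPochhammer_succ_eval_left, ascPochhammer_succ_eval]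

theorem Sq_Dq_eq_of_sub_eq_mul {γ δ s : ℂ} {f g : ℂ → ℂ} (h₀ : 2*s + γ + δ ≠ 0)
    (h₂ : 2*s + γ + δ + 2 ≠ 0) (hfg : ∀ t, f (t + 1) - f t = (2*t + γ + δ + 2) * g t) :
    Sq (Dq γ δ f) s = (g s + g (s - 1)) / 2 := by
  have hs := hfg s
  have hs₁ := hfg (s - 1)
  rw [sub_add_cancel] at hs₁
  have e₁ : s + 1/2 + 1/2 = s + 1 := by ring
  have e₂ : s + 1/2 - 1/2 = s := by ring
  have e₃ : s - 1/2 + 1/2 = s := by ring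
  have e₄ : s - 1/2 - 1/2 = s - 1 := by ring
  have e₅ : 2*(s + 1/2) + γ + δ + 1 = 2*s + γ + δ + 2 := by ring
  have e₆ : 2*(s - 1/2) + γ + δ + 1 = 2*s + γ + δ := by ring
  have e₇ : 2*(s - 1) + γ + δ + 2 = 2*s + γ + δ := by ring
  simp only [Sq, Dq, e₁, e₂, e₃, e₄, e₅, e₆, hs, hs₁, e₇, mul_div_cancel_left₀ _ h₀,
    mul_div_cancel_left₀ _ h₂]

theorem chi_succ (γ δ : ℂ) (n : ℕ) (s : ℂ) :
    chi γ δ (n + 1) s = chi γ δ n s * ((n - s) * (s + γ + δ + 1 + n)) :=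
  prod_range_succ _ _

theorem chi_eq_eval_ascPochhammer (γ δ : ℂ) (n : ℕ) (s : ℂ) :
    chi γ δ n s = (ascPochhammer ℂ n).eval (-s) * (ascPochhammer ℂ n).eval (s + γ + δ + 1) := by
  simp only [chi, ascPochhammer_eval_eq_prod_range, ← prod_mul_distrib]
  exact prod_congr rfl fun k _ => by ring

theorem chi_succ_add_one_sub_chi_succ (γ δ : ℂ) (n : ℕ) (s : ℂ) :
    chi γ δ (n + 1) (s + 1) - chi γ δ (n + 1) s
      = (2*s + γ + δ + 2) * (-(n + 1) * chi (γ + 1) δ n s) := by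
  have e₁ : -(s + 1) + 1 = -s := by ring
  have e₂ : s + 1 + γ + δ + 1 = s + γ + δ + 2 := by ring
  have e₃ : s + γ + δ + 1 + 1 = s + γ + δ + 2 := by ring
  have e₄ : s + (γ + 1) + δ + 1 = s + γ + δ + 2 := by ring
  rw [chi_eq_eval_ascPochhammer, chi_eq_eval_ascPochhammer, chi_eq_eval_ascPochhammer,
    ascPochhammer_succ_eval_left _ (-(s + 1)), ascPochhammer_succ_eval _ (s + 1 + γ + δ + 1),
    ascPochhammer_succ_eval _ (-s), ascPochhammer_succ_eval_left _ (s + γ + δ + 1), e₁, e₂, e₃, e₄]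
  ring

theorem lambda_mul_chi_add_chi_sub_one (γ δ : ℂ) (n : ℕ) (s : ℂ) :
    s * (s + γ + δ + 1) * (chi (γ + 1) δ n s + chi (γ + 1) δ n (s - 1))
      = n * (2*n + γ + δ + 1) * chi γ δ n s - 2 * chi γ δ (n + 1) s := by
  have hx := ascPochhammer_eval_mul_eval_add_one n (-s)
  have hy := ascPochhammer_eval_mul_eval_add_one n (s + γ + δ + 1)
  have e₁ : -(s - 1) = -s + 1 := by ring
  have e₂ : s + (γ + 1) + δ + 1 = s + γ + δ + 1 + 1 := by ring
  have e₃ : s - 1 + (γ + 1) + δ + 1 = s + γ + δ + 1 := by ring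
  rw [chi_succ, chi_eq_eval_ascPochhammer, chi_eq_eval_ascPochhammer, chi_eq_eval_ascPochhammer,
    e₁, e₂, e₃]
  linear_combination (s * (ascPochhammer ℂ n).eval (-s)) * hy
    - ((s + γ + δ + 1) * (ascPochhammer ℂ n).eval (s + γ + δ + 1)) * hx

theorem stmt_12_general (γ δ : ℂ) (n : ℕ) :
    ∀ s : ℂ, (2*s+γ+δ) * (2*s+γ+δ+2) ≠ 0 →
      (-(s * (s + γ + δ + 1))) * Sq (Dq γ δ (fun t => chi γ δ n t)) s
        = ((n : ℂ) * ((n : ℂ) - 1) * (2*(n : ℂ) + γ + δ - 1) / 2) * chi γ δ (n-1) s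
          - (n : ℂ) * chi γ δ n s := by
  intro s hs
  obtain ⟨h₀, h₂⟩ := mul_ne_zero_iff.mp hs
  cases n with
  | zero => simp [Sq, Dq, chi]
  | succ n =>
    rw [Sq_Dq_eq_of_sub_eq_mul h₀ h₂ (chi_succ_add_one_sub_chi_succ γ δ n), Nat.add_sub_cancel]
    push_cast
    linear_combination (n + 1) / 2 * lambda_mul_chi_add_chi_sub_one γ δ n s

theorem stmt_12 (γ δ : ℂ) (n : ℕ) (hn : 1 ≤ n) :
    ∀ s : ℂ, (2*s+γ+δ) * (2*s+γ+δ+2) ≠ 0 →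
      (-(s * (s + γ + δ + 1))) * Sq (Dq γ δ (fun t => chi γ δ n t)) s
        = ((n : ℂ) * ((n : ℂ) - 1) * (2*(n : ℂ) + γ + δ - 1) / 2) * chi γ δ (n-1) s
          - (n : ℂ) * chi γ δ n s :=
  stmt_12_general γ δ n
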